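/- arXiv:1601.07739 — 3 statements merged into one kernel-verified Lean document; each statement's English description precedes it below -/
import Mathlib

section
/- Let X be a nonempty finite design space, let p and s be natural numbers with 0 < s and s < p, let m : X → Matrix (Fin p) (Fin p) ℝ assign to each design point a symmetric positive semidefinite matrix, and let A : Matrix (Fin p) (Fin s) ℝ have rank s. For a design w (a probability weight function on X) write M(w) = ∑_{x ∈ X} w(x) • m(x). Suppose w* is a design such that M(w*) is positive definite. Then w* maximizes the D_A-criterion w ↦ -log(det(Aᵀ * M(w)⁻¹ * A)) over all designs w with M(w) positive definite if and only if for every x ∈ X one has trace(M(w*)⁻¹ * A * (Aᵀ * M(w*)⁻¹ * A)⁻¹ * Aᵀ * M(w*)⁻¹ * m(x)) ≤ s. -/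
/-!
The map `φ(M) = -log det (Aᵀ M⁻¹ A)` is concave on positive definite matrices, with gradient
`B(M) = M⁻¹ A (Aᵀ M⁻¹ A)⁻¹ Aᵀ M⁻¹` for the trace pairing, and `tr (B(M) M) = s`. Concretely
`φ(N) ≤ φ(M) + tr (B(M) N) - s`: with the left inverse `L = (Aᵀ M⁻¹ A)⁻¹ Aᵀ M⁻¹` of `A`, the
Gauss–Markov inequality `(Aᵀ N⁻¹ A)⁻¹ ≤ L N Lᵀ` and `log det X + log det Y ≤ tr (X Y) - s`
(`log λ ≤ λ - 1` on eigenvalues) combine to give it.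

If `tr (B(M*) m(x)) ≤ s` for every `x`, then averaging over a design `w` gives
`tr (B(M*) M(w)) ≤ s`, hence `φ(M(w)) ≤ φ(M*)`. Conversely, for `N = (1 - t) M* + t m(x)` the
tangent inequality at `N` and optimality of `M*` give `tr (B(N) M*) ≥ s`; splitting
`s = tr (B(N) N)` along `N` then yields `tr (B(N) m(x)) ≤ s`, and `t → 0⁺` finishes by
continuity of `B`.
-/

open Matrix
open scoped ComplexOrder

namespace Matrix

variable {n m : Type*}

theorem mulVec_injective_of_rank_eq_card {K : Type*} [Field K] [Fintype m] {A : Matrix n m K}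
    (hA : A.rank = Fintype.card m) : Function.Injective A.mulVec :=
  mulVec_injective_iff.mpr <| linearIndependent_iff_card_eq_finrank_span.mpr <| by
    rw [← hA, rank_eq_finrank_span_cols, Set.finrank]

theorem PosDef.one_sub_smul_add_smul [Fintype n] {M P : Matrix n n ℝ} (hM : M.PosDef)
    (hP : P.PosSemidef) {t : ℝ} (ht0 : 0 ≤ t) (ht1 : t < 1) : ((1 - t) • M + t • P).PosDef :=
  (hM.smul (sub_pos.mpr ht1)).add_posSemidef (hP.smul ht0)

theorem PosDef.transpose_eq {M : Matrix n n ℝ} (hM : M.PosDef) : Mᵀ = M := by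
  rw [← conjTranspose_eq_transpose_of_trivial, hM.1.eq]

theorem PosDef.transpose_mul_mul_same [Fintype n] [Fintype m] {M : Matrix n n ℝ}
    (hM : M.PosDef) {A : Matrix n m ℝ} (hA : Function.Injective A.mulVec) :
    (Aᵀ * M * A).PosDef := by
  simpa only [conjTranspose_eq_transpose_of_trivial] using hM.conjTranspose_mul_mul_same hA

variable [Fintype n] [DecidableEq n]

open scoped MatrixOrder in
theorem PosSemidef.exists_eq_conjTranspose_mul_self {𝕜 : Type*} [RCLike 𝕜]
    {C : Matrix n n 𝕜} (hC : C.PosSemidef) : ∃ B : Matrix n n 𝕜, C = Bᴴ * B := by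
  refine ⟨CFC.sqrt C, ?_⟩
  rw [(CFC.sqrt_nonneg C).posSemidef.1.eq, CFC.sqrt_mul_sqrt_self C hC.nonneg]

theorem PosSemidef.trace_mul_nonneg {𝕜 : Type*} [RCLike 𝕜] {C P : Matrix n n 𝕜}
    (hC : C.PosSemidef) (hP : P.PosSemidef) : 0 ≤ (C * P).trace := by
  obtain ⟨B, rfl⟩ := hC.exists_eq_conjTranspose_mul_self
  rw [Matrix.mul_assoc, trace_mul_comm]
  exact (hP.mul_mul_conjTranspose_same B).trace_nonneg

theorem PosDef.log_det_le_trace_sub_card {G : Matrix n n ℝ} (hG : G.PosDef) :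
    Real.log G.det ≤ G.trace - Fintype.card n := by
  have hpos := hG.eigenvalues_pos
  rw [hG.1.det_eq_prod_eigenvalues, hG.1.trace_eq_sum_eigenvalues]
  simp only [RCLike.ofReal_real_eq_id, id]
  rw [Real.log_prod fun i _ => (hpos i).ne', ← Finset.card_univ, Finset.card_eq_sum_ones,
    Nat.cast_sum, ← Finset.sum_sub_distrib]
  exact Finset.sum_le_sum fun i _ => by
    simpa using Real.log_le_sub_one_of_pos (hpos i)

theorem PosDef.log_det_add_log_det_le {X Y : Matrix n n ℝ} (hX : X.PosDef) (hY : Y.PosDef) :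
    Real.log X.det + Real.log Y.det ≤ (X * Y).trace - Fintype.card n := by
  obtain ⟨B, rfl⟩ := hY.posSemidef.exists_eq_conjTranspose_mul_self
  have hdet : (B * X * Bᴴ).det = X.det * (Bᴴ * B).det := by
    simp only [det_mul]; ring
  have hG : (B * X * Bᴴ).PosDef :=
    (hX.posSemidef.mul_mul_conjTranspose_same B).posDef_iff_det_ne_zero.mpr <| by
      rw [hdet]; exact (mul_pos hX.det_pos hY.det_pos).ne'
  have htr : (B * X * Bᴴ).trace = (X * (Bᴴ * B)).trace := by
    rw [trace_mul_comm, ← Matrix.mul_assoc, trace_mul_comm]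
  rw [← Real.log_mul hX.det_pos.ne' hY.det_pos.ne', ← hdet, ← htr]
  exact hG.log_det_le_trace_sub_card

theorem PosDef.continuousAt_inv {M : Matrix n n ℝ} (hM : M.PosDef) : ContinuousAt Inv.inv M :=
  continuousAt_matrix_inv M <| by
    rw [Ring.inverse_eq_inv']
    exact continuousAt_inv₀ hM.det_pos.ne'

open scoped MatrixOrder in
/-- Gauss–Markov inequality. -/
theorem PosDef.inv_transpose_mul_inv_mul_le [Fintype m] [DecidableEq m] {N : Matrix n n ℝ}
    (hN : N.PosDef) {A : Matrix n m ℝ} {L : Matrix m n ℝ} (hLA : L * A = 1) :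
    (Aᵀ * N⁻¹ * A)⁻¹ ≤ L * N * Lᵀ := by
  have hA : Function.Injective A.mulVec := fun u v huv => by
    simpa [mulVec_mulVec, hLA] using congrArg (L *ᵥ ·) huv
  set C := Aᵀ * N⁻¹ * A
  have hC : C.PosDef := hN.inv.transpose_mul_mul_same hA
  set R := L - C⁻¹ * Aᵀ * N⁻¹
  have hRNR : R * N * Rᵀ = L * N * Lᵀ - C⁻¹ := by
    have hNu : IsUnit N.det := hN.det_pos.ne'.isUnit
    have hAL : Aᵀ * Lᵀ = 1 := by rw [← transpose_mul, hLA, transpose_one]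
    have hLAC : L * (A * C⁻¹) = C⁻¹ := by rw [← Matrix.mul_assoc, hLA, Matrix.one_mul]
    have hCC : Aᵀ * (N⁻¹ * (A * C⁻¹)) = 1 := by
      simp only [← Matrix.mul_assoc]
      exact mul_nonsing_inv C hC.det_pos.ne'.isUnit
    simp only [R, transpose_sub, transpose_mul, transpose_transpose, hN.inv.transpose_eq,
      hC.inv.transpose_eq, Matrix.sub_mul, Matrix.mul_sub, Matrix.mul_assoc,
      mul_nonsing_inv_cancel_left _ _ hNu, nonsing_inv_mul_cancel_left _ _ hNu]
    rw [hAL, hLAC, hCC, Matrix.mul_one]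
    abel
  rw [le_iff, ← hRNR]
  simpa only [conjTranspose_eq_transpose_of_trivial] using
    hN.posSemidef.mul_mul_conjTranspose_same R

end Matrix

theorem Finset.sum_one_sub_smul_add_single_smul {X R E : Type*} [Fintype X] [DecidableEq X]
    [Ring R] [AddCommGroup E] [Module R E] (w : X → R) (f : X → E) (x : X) (t : R) :
    ∑ y, ((1 - t) • w + t • Pi.single x 1 : X → R) y • f y =
      (1 - t) • ∑ y, w y • f y + t • f x := by
  simp [add_smul, mul_smul, Finset.sum_add_distrib, Finset.smul_sum, Pi.single_apply]

section DAOptimality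

variable {n m : Type*} [Fintype n] [Fintype m] [DecidableEq n] [DecidableEq m]
  {A : Matrix n m ℝ}

noncomputable def daCriterion (A : Matrix n m ℝ) (M : Matrix n n ℝ) : ℝ :=
  -Real.log (Aᵀ * M⁻¹ * A).det

noncomputable def daGradient (A : Matrix n m ℝ) (M : Matrix n n ℝ) : Matrix n n ℝ :=
  M⁻¹ * A * (Aᵀ * M⁻¹ * A)⁻¹ * Aᵀ * M⁻¹

theorem trace_daGradient_mul_self (hA : Function.Injective A.mulVec) {M : Matrix n n ℝ}
    (hM : M.PosDef) : (daGradient A M * M).trace = Fintype.card m := by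
  have hC : (Aᵀ * M⁻¹ * A).PosDef := hM.inv.transpose_mul_mul_same hA
  calc (daGradient A M * M).trace = (M⁻¹ * A * (Aᵀ * M⁻¹ * A)⁻¹ * Aᵀ).trace := by
        rw [daGradient, Matrix.mul_assoc _ M⁻¹, nonsing_inv_mul _ hM.det_pos.ne'.isUnit,
          Matrix.mul_one]
    _ = ((Aᵀ * M⁻¹ * A) * (Aᵀ * M⁻¹ * A)⁻¹).trace := by
        rw [trace_mul_comm]; simp only [Matrix.mul_assoc]
    _ = Fintype.card m := by
        rw [mul_nonsing_inv _ hC.det_pos.ne'.isUnit, trace_one]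

theorem daCriterion_le_add_trace (hA : Function.Injective A.mulVec) {M N : Matrix n n ℝ}
    (hM : M.PosDef) (hN : N.PosDef) :
    daCriterion A N ≤ daCriterion A M + (daGradient A M * N).trace - Fintype.card m := by
  unfold daCriterion daGradient
  set C := Aᵀ * M⁻¹ * A
  set CN := Aᵀ * N⁻¹ * A
  have hC : C.PosDef := hM.inv.transpose_mul_mul_same hA
  have hCN : CN.PosDef := hN.inv.transpose_mul_mul_same hA
  have hCu : IsUnit C.det := hC.det_pos.ne'.isUnit
  set L := C⁻¹ * Aᵀ * M⁻¹
  have hLA : L * A = 1 := by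
    simp only [L, Matrix.mul_assoc]
    rw [← Matrix.mul_assoc Aᵀ, nonsing_inv_mul _ hCu]
  have hLCL : Lᵀ * C * L = M⁻¹ * A * C⁻¹ * Aᵀ * M⁻¹ := by
    have hLt : Lᵀ = M⁻¹ * A * C⁻¹ := by
      simp only [L, transpose_mul, hC.inv.transpose_eq, hM.inv.transpose_eq, transpose_transpose,
        Matrix.mul_assoc]
    rw [hLt, Matrix.mul_assoc _ C⁻¹, nonsing_inv_mul _ hCu, Matrix.mul_one]
    simp only [L, Matrix.mul_assoc]
  have hcov : 0 ≤ ((L * N * Lᵀ - CN⁻¹) * C).trace :=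
    PosSemidef.trace_mul_nonneg (hN.inv_transpose_mul_inv_mul_le hLA) hC.posSemidef
  have htr : (L * N * Lᵀ * C).trace = (M⁻¹ * A * C⁻¹ * Aᵀ * M⁻¹ * N).trace := by
    rw [← hLCL, Matrix.mul_assoc (L * N), trace_mul_comm (L * N)]
    simp only [Matrix.mul_assoc]
  have hlog := hCN.inv.log_det_add_log_det_le hC
  rw [det_nonsing_inv, Ring.inverse_eq_inv', Real.log_inv] at hlog
  rw [Matrix.sub_mul, trace_sub, htr] at hcov
  linarith

theorem continuousAt_daGradient (hA : Function.Injective A.mulVec) {M : Matrix n n ℝ}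
    (hM : M.PosDef) : ContinuousAt (daGradient A) M := by
  have hMinv := hM.continuousAt_inv
  have hCinv := (hM.inv.transpose_mul_mul_same hA).continuousAt_inv
  unfold daGradient
  fun_prop

theorem trace_daGradient_mul_le_of_daCriterion_le (hA : Function.Injective A.mulVec)
    {M P : Matrix n n ℝ} {t : ℝ} (hM : M.PosDef) (ht : t ∈ Set.Ioc 0 1)
    (hN : ((1 - t) • M + t • P).PosDef)
    (hle : daCriterion A ((1 - t) • M + t • P) ≤ daCriterion A M) :
    (daGradient A ((1 - t) • M + t • P) * P).trace ≤ Fintype.card m := by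
  set N := (1 - t) • M + t • P
  have hM_ge : (Fintype.card m : ℝ) ≤ (daGradient A N * M).trace := by
    linarith [daCriterion_le_add_trace hA hN hM]
  have hsplit : (daGradient A N * N).trace =
      (1 - t) * (daGradient A N * M).trace + t * (daGradient A N * P).trace := by
    simp only [N, Matrix.mul_add, Matrix.mul_smul, trace_add, trace_smul, smul_eq_mul]
  rw [trace_daGradient_mul_self hA hN] at hsplit
  nlinarith [ht.1, ht.2]

theorem trace_daGradient_mul_le_of_forall_daCriterion_le (hA : Function.Injective A.mulVec)
    {M P : Matrix n n ℝ} (hM : M.PosDef) (hP : P.PosSemidef)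
    (hopt : ∀ t ∈ Set.Ioo (0 : ℝ) 1, daCriterion A ((1 - t) • M + t • P) ≤ daCriterion A M) :
    (daGradient A M * P).trace ≤ Fintype.card m := by
  have hpath : Continuous fun t : ℝ => (1 - t) • M + t • P := by fun_prop
  have hG : ContinuousAt (fun t : ℝ => daGradient A ((1 - t) • M + t • P)) 0 :=
    (continuousAt_daGradient hA hM).comp_of_eq hpath.continuousAt (by simp)
  have hlim : Filter.Tendsto (fun t : ℝ => (daGradient A ((1 - t) • M + t • P) * P).trace)
      (nhdsWithin 0 (Set.Ioi 0)) (nhds (daGradient A M * P).trace) := by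
    have hcont : ContinuousAt
        (fun t : ℝ => (daGradient A ((1 - t) • M + t • P) * P).trace) 0 := by
      fun_prop
    simpa using hcont.tendsto.mono_left nhdsWithin_le_nhds
  refine le_of_tendsto hlim ?_
  filter_upwards [Ioo_mem_nhdsGT (zero_lt_one' ℝ)] with t ht
  exact trace_daGradient_mul_le_of_daCriterion_le hA hM ⟨ht.1, ht.2.le⟩
    (hM.one_sub_smul_add_smul hP ht.1.le ht.2) (hopt t ht)

theorem daCriterion_sum_smul_le (hA : Function.Injective A.mulVec) {X : Type*} [Fintype X]
    {F : X → Matrix n n ℝ} {M : Matrix n n ℝ} (hM : M.PosDef) {w : X → ℝ}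
    (hw0 : ∀ x, 0 ≤ w x) (hw1 : ∑ x, w x = 1) (hN : (∑ x, w x • F x).PosDef)
    (hF : ∀ x, (daGradient A M * F x).trace ≤ Fintype.card m) :
    daCriterion A (∑ x, w x • F x) ≤ daCriterion A M := by
  have htr : (daGradient A M * ∑ x, w x • F x).trace ≤ Fintype.card m :=
    calc (daGradient A M * ∑ x, w x • F x).trace
        = ∑ x, w x * (daGradient A M * F x).trace := by
          simp only [Matrix.mul_sum, trace_sum, Matrix.mul_smul, trace_smul, smul_eq_mul]
      _ ≤ ∑ x, w x * Fintype.card m :=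
          Finset.sum_le_sum fun x _ => mul_le_mul_of_nonneg_left (hF x) (hw0 x)
      _ = Fintype.card m := by rw [← Finset.sum_mul, hw1, one_mul]
  linarith [daCriterion_le_add_trace hA hM hN]

end DAOptimality

theorem DA_optimality_equivalence_general
    {X : Type*} [Fintype X] (p s : ℕ)
    (m : X → Matrix (Fin p) (Fin p) ℝ) (hm : ∀ x, (m x).PosSemidef)
    (A : Matrix (Fin p) (Fin s) ℝ) (hA : A.rank = s)
    (wstar : X → ℝ) (hw0 : ∀ x, 0 ≤ wstar x) (hw1 : ∑ x, wstar x = 1)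
    (hM : (∑ x, wstar x • m x).PosDef) :
    (∀ w : X → ℝ, (∀ x, 0 ≤ w x) → ∑ x, w x = 1 → (∑ x, w x • m x).PosDef →
        -Real.log (Aᵀ * (∑ x, w x • m x)⁻¹ * A).det ≤
          -Real.log (Aᵀ * (∑ x, wstar x • m x)⁻¹ * A).det) ↔
      (∀ x : X,
        ((∑ y, wstar y • m y)⁻¹ * A * (Aᵀ * (∑ y, wstar y • m y)⁻¹ * A)⁻¹ * Aᵀ *
            (∑ y, wstar y • m y)⁻¹ * m x).trace ≤ (s : ℝ)) := by
  classical
  have hAinj : Function.Injective A.mulVec := mulVec_injective_of_rank_eq_card (by simpa using hA)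
  set M := ∑ x, wstar x • m x
  constructor
  · intro hopt x
    have hseg : ∀ t ∈ Set.Ioo (0 : ℝ) 1,
        daCriterion A ((1 - t) • M + t • m x) ≤ daCriterion A M := by
      intro t ht
      set w := (1 - t) • wstar + t • Pi.single x 1
      have hw : ∑ y, w y • m y = (1 - t) • M + t • m x :=
        Finset.sum_one_sub_smul_add_single_smul wstar m x t
      rw [← hw]
      refine hopt w (fun y => ?_) ?_ (hw ▸ hM.one_sub_smul_add_smul (hm x) ht.1.le ht.2)
      · have hsingle : 0 ≤ (Pi.single x 1 : X → ℝ) y :=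
          (Pi.single_nonneg.mpr zero_le_one : (0 : X → ℝ) ≤ Pi.single x 1) y
        simp only [w, Pi.add_apply, Pi.smul_apply, smul_eq_mul]
        nlinarith [hw0 y, ht.1, ht.2]
      · simpa [w, hw1] using Finset.sum_one_sub_smul_add_single_smul wstar (fun _ => (1 : ℝ)) x t
    simpa [daGradient] using trace_daGradient_mul_le_of_forall_daCriterion_le hAinj hM (hm x) hseg
  · intro hcond w hw0' hw1' hMw
    exact daCriterion_sum_smul_le hAinj hM hw0' hw1' hMw (by simpa [daGradient] using hcond)

/-- Kiefer–Wolfowitz type equivalence theorem for `D_A`-optimality,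
equivalence (1) ⇔ (2) of Theorem 1, over a finite design space. -/
theorem DA_optimality_equivalence
    {X : Type*} [Fintype X] [Nonempty X] (p s : ℕ) (hs : 0 < s) (hsp : s < p)
    (m : X → Matrix (Fin p) (Fin p) ℝ) (hm : ∀ x, (m x).PosSemidef)
    (A : Matrix (Fin p) (Fin s) ℝ) (hA : A.rank = s)
    (wstar : X → ℝ) (hw0 : ∀ x, 0 ≤ wstar x) (hw1 : ∑ x, wstar x = 1)
    (hM : (∑ x, wstar x • m x).PosDef) :
    (∀ w : X → ℝ, (∀ x, 0 ≤ w x) → ∑ x, w x = 1 → (∑ x, w x • m x).PosDef →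
        -Real.log (Aᵀ * (∑ x, w x • m x)⁻¹ * A).det ≤
          -Real.log (Aᵀ * (∑ x, wstar x • m x)⁻¹ * A).det) ↔
      (∀ x : X,
        ((∑ y, wstar y • m y)⁻¹ * A * (Aᵀ * (∑ y, wstar y • m y)⁻¹ * A)⁻¹ * Aᵀ *
            (∑ y, wstar y • m y)⁻¹ * m x).trace ≤ (s : ℝ)) :=
  DA_optimality_equivalence_general p s m hm A hA wstar hw0 hw1 hM
end

section
/- Let X be a nonempty finite design space, let p be a natural number with 0 < p, and let m : X → Matrix (Fin p) (Fin p) ℝ assign to each design point a symmetric positive semidefinite matrix. Suppose w* is a design (w*(x) ≥ 0, ∑ w* = 1) such that M(w*) = ∑_{x∈X} w*(x) • m(x) is positive definite. Then w* maximizes w ↦ log(det(M(w))) over all designs w with M(w) positive definite if and only if for every x ∈ X, trace(M(w*)⁻¹ * m(x)) ≤ p. -/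
open Matrix BigOperators

/-!
The tangent-plane inequality `log det A ≤ log det B + tr (B⁻¹ A) - p` for positive definite
`A`, `B` (`log x ≤ x - 1` on the eigenvalues of `Q A Qᴴ`, where `Qᴴ Q = B⁻¹`) gives sufficiency,
because `tr (M(w*)⁻¹ M(w))` is the `w`-average of the sensitivity `x ↦ tr (M(w*)⁻¹ m(x))`.
Conversely, `det (1 + t K) = 1 + t tr K + O(t²)`, so if the sensitivity exceeds `p` at `x₀`,
moving a small weight `t` from `w*` to `x₀` strictly increases `det M`.
-/

open Filter Topology

namespace Matrix

variable {n : Type*} [Fintype n] [DecidableEq n]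

theorem PosDef.log_det_le_trace_sub_card_s8 {C : Matrix n n ℝ} (hC : C.PosDef) :
    Real.log C.det ≤ C.trace - Fintype.card n := by
  have hev := hC.eigenvalues_pos
  rw [hC.1.det_eq_prod_eigenvalues, hC.1.trace_eq_sum_eigenvalues]
  simp only [RCLike.ofReal_real_eq_id, id_eq]
  rw [Real.log_prod fun i _ => (hev i).ne']
  calc ∑ i, Real.log (hC.1.eigenvalues i) ≤ ∑ i, (hC.1.eigenvalues i - 1) :=
        Finset.sum_le_sum fun i _ => Real.log_le_sub_one_of_pos (hev i)
    _ = ∑ i, hC.1.eigenvalues i - Fintype.card n := by simp [Finset.sum_sub_distrib]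

open scoped MatrixOrder in
theorem PosDef.log_det_le_log_det_add_trace_inv_mul_sub_card {A B : Matrix n n ℝ}
    (hA : A.PosDef) (hB : B.PosDef) :
    Real.log A.det ≤ Real.log B.det + (B⁻¹ * A).trace - Fintype.card n := by
  obtain ⟨Q, hQ, hQB⟩ :=
    CStarAlgebra.isStrictlyPositive_iff_eq_star_mul_self.mp hB.inv.isStrictlyPositive
  rw [star_eq_conjTranspose] at hQB
  have hC : (Q * A * Qᴴ).PosDef :=
    hA.mul_mul_conjTranspose_same (vecMul_injective_iff_isUnit.mpr hQ)
  have htrace : (Q * A * Qᴴ).trace = (B⁻¹ * A).trace := by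
    rw [trace_mul_comm, ← mul_assoc, ← hQB]
  have hdet : (Q * A * Qᴴ).det = B.det⁻¹ * A.det := by
    rw [det_mul, det_mul, mul_comm, ← mul_assoc, ← det_mul, ← hQB, det_nonsing_inv,
      Ring.inverse_eq_inv']
  have := hC.log_det_le_trace_sub_card_s8
  rw [htrace, hdet, Real.log_mul (inv_ne_zero hB.det_pos.ne') hA.det_pos.ne', Real.log_inv] at this
  linarith

theorem eventually_one_lt_det_one_add_smul {K : Matrix n n ℝ} (hK : 0 < K.trace) :
    ∀ᶠ t in 𝓝[>] (0 : ℝ), 1 < (1 + t • K).det := by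
  set P := (det (1 + (Polynomial.X : Polynomial ℝ) • K.map Polynomial.C)).divX.divX
  have hcont : Continuous fun t : ℝ => K.trace + P.eval t * t := by fun_prop
  have hpos : ∀ᶠ t in 𝓝 (0 : ℝ), 0 < K.trace + P.eval t * t :=
    (hcont.tendsto 0).eventually (eventually_gt_nhds (by simpa using hK))
  filter_upwards [nhdsWithin_le_nhds hpos, self_mem_nhdsWithin] with t ht (ht0 : 0 < t)
  have hexp : (1 + t • K).det = 1 + t * (K.trace + P.eval t * t) := by
    rw [det_one_add_smul]; ring
  rw [hexp]
  linarith [mul_pos ht0 ht]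

theorem PosDef.eventually_det_lt_det_one_sub_smul_add_smul {A B : Matrix n n ℝ} (hB : B.PosDef)
    (hAB : (Fintype.card n : ℝ) < (B⁻¹ * A).trace) :
    ∀ᶠ t in 𝓝[>] (0 : ℝ), B.det < ((1 - t) • B + t • A).det := by
  have hBunit : IsUnit B.det := hB.det_pos.ne'.isUnit
  have htrace : 0 < (B⁻¹ * (A - B)).trace := by
    rw [mul_sub, nonsing_inv_mul B hBunit, trace_sub, trace_one]
    linarith
  filter_upwards [eventually_one_lt_det_one_add_smul htrace] with t ht
  have hfactor : (1 - t) • B + t • A = B * (1 + t • (B⁻¹ * (A - B))) := by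
    rw [mul_add, mul_one, mul_smul_comm, ← mul_assoc, mul_nonsing_inv B hBunit, one_mul, smul_sub,
      sub_smul, one_smul]
    abel
  rw [hfactor, det_mul]
  exact lt_mul_of_one_lt_right hB.det_pos ht

end Matrix

section Design

variable {X : Type*} [Fintype X] {n : Type*} {m : X → Matrix n n ℝ} {w : X → ℝ}

theorem trace_mul_sum_smul_le [Fintype n] {N : Matrix n n ℝ} {c : ℝ}
    (hw : w ∈ stdSimplex ℝ X) (h : ∀ x, (N * m x).trace ≤ c) :
    (N * ∑ x, w x • m x).trace ≤ c := by
  rw [Matrix.mul_sum, trace_sum]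
  calc ∑ x, (N * (w x • m x)).trace = ∑ x, w x * (N * m x).trace := by
        simp only [mul_smul_comm, trace_smul, smul_eq_mul]
    _ ≤ ∑ x, w x * c := Finset.sum_le_sum fun x _ => mul_le_mul_of_nonneg_left (h x) (hw.1 x)
    _ = c := by rw [← Finset.sum_mul, hw.2, one_mul]

theorem sum_one_sub_smul_add_smul_single_smul [DecidableEq X] (x₀ : X) (t : ℝ) :
    ∑ x, ((1 - t) • w + t • Pi.single x₀ 1 : X → ℝ) x • m x =
      (1 - t) • ∑ x, w x • m x + t • m x₀ := by
  simp only [← Fintype.linearCombination_apply ℝ, map_add, map_smul,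
    Fintype.linearCombination_apply_single, one_smul]

theorem exists_mem_stdSimplex_det_gt [Fintype n] [DecidableEq n] {x₀ : X}
    (hm : (m x₀).PosSemidef) (hw : w ∈ stdSimplex ℝ X) (hM : (∑ x, w x • m x).PosDef)
    (hx₀ : (Fintype.card n : ℝ) < ((∑ x, w x • m x)⁻¹ * m x₀).trace) :
    ∃ v ∈ stdSimplex ℝ X, (∑ x, v x • m x).PosDef ∧
      (∑ x, w x • m x).det < (∑ x, v x • m x).det := by
  classical
  obtain ⟨t, ⟨hdet, ht₀, ht₁⟩⟩ :=
    ((hM.eventually_det_lt_det_one_sub_smul_add_smul hx₀).and (Ioo_mem_nhdsGT one_pos)).exists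
  refine ⟨(1 - t) • w + t • Pi.single x₀ 1, convex_stdSimplex ℝ X hw
    (single_mem_stdSimplex ℝ x₀) (by linarith) ht₀.le (by ring), ?_⟩
  rw [sum_one_sub_smul_add_smul_single_smul]
  exact ⟨(hM.smul (by linarith)).add_posSemidef (hm.smul ht₀.le), hdet⟩

end Design

theorem D_optimality_equivalence_general
    {X : Type*} [Fintype X] (p : ℕ)
    (m : X → Matrix (Fin p) (Fin p) ℝ) (hm : ∀ x, (m x).PosSemidef)
    (wstar : X → ℝ) (hw0 : ∀ x, 0 ≤ wstar x) (hw1 : ∑ x, wstar x = 1)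
    (hM : (∑ x, wstar x • m x).PosDef) :
    (∀ w : X → ℝ, (∀ x, 0 ≤ w x) → ∑ x, w x = 1 → (∑ x, w x • m x).PosDef →
        Real.log (∑ x, w x • m x).det ≤ Real.log (∑ x, wstar x • m x).det) ↔
      (∀ x : X, ((∑ y, wstar y • m y)⁻¹ * m x).trace ≤ (p : ℝ)) := by
  constructor
  · intro hmax x₀
    by_contra! hx₀
    obtain ⟨v, hv, hvpos, hlt⟩ :=
      exists_mem_stdSimplex_det_gt (hm x₀) ⟨hw0, hw1⟩ hM (by simpa using hx₀)
    exact (hmax v hv.1 hv.2 hvpos).not_gt (Real.log_lt_log hM.det_pos hlt)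
  · intro hsens w hw0' hw1' hwpos
    have htangent := hwpos.log_det_le_log_det_add_trace_inv_mul_sub_card hM
    have haverage := trace_mul_sum_smul_le ⟨hw0', hw1'⟩ hsens
    rw [Fintype.card_fin] at htangent
    linarith

/-- Kiefer–Wolfowitz type equivalence theorem for `D`-optimality over a finite
design space: `w*` maximizes `log det M(w)` iff the sensitivity function
`trace(M(w*)⁻¹ m(x))` is bounded by `p` on the design space. -/
theorem D_optimality_equivalence
    {X : Type*} [Fintype X] [Nonempty X] (p : ℕ) (hp : 0 < p)
    (m : X → Matrix (Fin p) (Fin p) ℝ) (hm : ∀ x, (m x).PosSemidef)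
    (wstar : X → ℝ) (hw0 : ∀ x, 0 ≤ wstar x) (hw1 : ∑ x, wstar x = 1)
    (hM : (∑ x, wstar x • m x).PosDef) :
    (∀ w : X → ℝ, (∀ x, 0 ≤ w x) → ∑ x, w x = 1 → (∑ x, w x • m x).PosDef →
        Real.log (∑ x, w x • m x).det ≤ Real.log (∑ x, wstar x • m x).det) ↔
      (∀ x : X, ((∑ y, wstar y • m y)⁻¹ * m x).trace ≤ (p : ℝ)) :=
  D_optimality_equivalence_general p m hm wstar hw0 hw1 hM
end

section
/- Let C₀ : [0,1] × [0,1] → [0,1] be a 2-copula and let α₂, α₃ ∈ [0,1). Then the Khoudraji transform C(u,v) = u^{α₂} * v^{α₃} * C₀(u^{1-α₂}, v^{1-α₃}) is a 2-copula: it maps [0,1]² into [0,1], satisfies C(u,0) = 0, C(0,v) = 0, C(u,1) = u, C(1,v) = v for all u,v ∈ [0,1], and satisfies the 2-increasing property C(u₂,v₂) - C(u₂,v₁) - C(u₁,v₂) + C(u₁,v₁) ≥ 0 whenever 0 ≤ u₁ ≤ u₂ ≤ 1 and 0 ≤ v₁ ≤ v₂ ≤ 1. -/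
open Set Real

/-- A 2-copula, viewed as a real function of two variables on `[0,1] × [0,1]`:
it maps into `[0,1]`, is grounded, has uniform margins, and is 2-increasing. -/
def IsCopula2 (C : ℝ → ℝ → ℝ) : Prop :=
  (∀ u v, u ∈ Icc (0 : ℝ) 1 → v ∈ Icc (0 : ℝ) 1 → C u v ∈ Icc (0 : ℝ) 1) ∧
  (∀ u ∈ Icc (0 : ℝ) 1, C u 0 = 0) ∧
  (∀ v ∈ Icc (0 : ℝ) 1, C 0 v = 0) ∧
  (∀ u ∈ Icc (0 : ℝ) 1, C u 1 = u) ∧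
  (∀ v ∈ Icc (0 : ℝ) 1, C 1 v = v) ∧
  (∀ u₁ u₂ v₁ v₂ : ℝ, 0 ≤ u₁ → u₁ ≤ u₂ → u₂ ≤ 1 → 0 ≤ v₁ → v₁ ≤ v₂ → v₂ ≤ 1 →
    0 ≤ C u₂ v₂ - C u₂ v₁ - C u₁ v₂ + C u₁ v₁)

/-- Khoudraji's asymmetrization of a 2-copula is again a 2-copula. -/
theorem khoudraji_isCopula
    (C₀ : ℝ → ℝ → ℝ) (hC₀ : IsCopula2 C₀)
    (α₂ α₃ : ℝ) (hα₂ : α₂ ∈ Ico (0 : ℝ) 1) (hα₃ : α₃ ∈ Ico (0 : ℝ) 1) :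
    IsCopula2 (fun u v =>
      u ^ α₂ * v ^ α₃ * C₀ (u ^ (1 - α₂)) (v ^ (1 - α₃))) := by
  obtain ⟨hrange, hg1, hg2, hm1, hm2, hinc⟩ := hC₀
  obtain ⟨hα₂0, hα₂1⟩ := hα₂
  obtain ⟨hα₃0, hα₃1⟩ := hα₃
  have h2pos : 0 < 1 - α₂ := by linarith
  have h3pos : 0 < 1 - α₃ := by linarith
  -- powers of [0,1] numbers with nonneg exponents lie in [0,1]
  have hpow : ∀ (x e : ℝ), x ∈ Icc (0:ℝ) 1 → 0 ≤ e → x ^ e ∈ Icc (0:ℝ) 1 := by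
    intro x e hx he
    exact ⟨Real.rpow_nonneg hx.1 e, Real.rpow_le_one hx.1 hx.2 he⟩
  -- monotonicity of rpow in the base
  have hmonopow : ∀ (x y e : ℝ), 0 ≤ x → x ≤ y → 0 ≤ e → x ^ e ≤ y ^ e := by
    intro x y e hx hxy he
    exact Real.rpow_le_rpow hx hxy he
  -- C₀ is nondecreasing in the first argument
  have hmono1 : ∀ u₁ u₂ v, 0 ≤ u₁ → u₁ ≤ u₂ → u₂ ≤ 1 → v ∈ Icc (0:ℝ) 1 →
      C₀ u₁ v ≤ C₀ u₂ v := by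
    intro u₁ u₂ v hu1 hu12 hu2 hv
    have := hinc u₁ u₂ 0 v hu1 hu12 hu2 le_rfl hv.1 hv.2
    have e1 := hg1 u₁ ⟨hu1, le_trans hu12 hu2⟩
    have e2 := hg1 u₂ ⟨le_trans hu1 hu12, hu2⟩
    linarith
  -- C₀ is nondecreasing in the second argument
  have hmono2 : ∀ u v₁ v₂, u ∈ Icc (0:ℝ) 1 → 0 ≤ v₁ → v₁ ≤ v₂ → v₂ ≤ 1 →
      C₀ u v₁ ≤ C₀ u v₂ := by
    intro u v₁ v₂ hu hv1 hv12 hv2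
    have := hinc 0 u v₁ v₂ le_rfl hu.1 hu.2 hv1 hv12 hv2
    have e1 := hg2 v₁ ⟨hv1, le_trans hv12 hv2⟩
    have e2 := hg2 v₂ ⟨le_trans hv1 hv12, hv2⟩
    linarith
  refine ⟨?_, ?_, ?_, ?_, ?_, ?_⟩
  · -- range
    intro u v hu hv
    have h1 := hpow u α₂ hu hα₂0
    have h2 := hpow v α₃ hv hα₃0
    have h3 := hrange _ _ (hpow u (1 - α₂) hu h2pos.le) (hpow v (1 - α₃) hv h3pos.le)
    constructor
    · exact mul_nonneg (mul_nonneg h1.1 h2.1) h3.1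
    · calc u ^ α₂ * v ^ α₃ * C₀ (u ^ (1 - α₂)) (v ^ (1 - α₃))
          ≤ 1 * 1 * 1 := by
            apply mul_le_mul (mul_le_mul h1.2 h2.2 h2.1 zero_le_one) h3.2 h3.1 (by norm_num)
      _ = 1 := by ring
  · -- C u 0 = 0
    intro u hu
    simp only
    have : (0:ℝ) ^ (1 - α₃) = 0 := Real.zero_rpow h3pos.ne'
    rw [this, hg1 _ (hpow u (1 - α₂) hu h2pos.le), mul_zero]
  · -- C 0 v = 0
    intro v hv
    simp only
    have : (0:ℝ) ^ (1 - α₂) = 0 := Real.zero_rpow h2pos.ne'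
    rw [this, hg2 _ (hpow v (1 - α₃) hv h3pos.le), mul_zero]
  · -- C u 1 = u
    intro u hu
    simp only [Real.one_rpow, mul_one]
    rw [hm1 _ (hpow u (1 - α₂) hu h2pos.le)]
    rcases eq_or_lt_of_le hu.1 with h | h
    · rw [← h, Real.zero_rpow h2pos.ne', mul_zero]
    · rw [← Real.rpow_add h, add_sub_cancel, Real.rpow_one]
  · -- C 1 v = v
    intro v hv
    simp only [Real.one_rpow, one_mul]
    rw [hm2 _ (hpow v (1 - α₃) hv h3pos.le)]
    rcases eq_or_lt_of_le hv.1 with h | h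
    · rw [← h, Real.zero_rpow h3pos.ne', mul_zero]
    · rw [← Real.rpow_add h, add_sub_cancel, Real.rpow_one]
  · -- 2-increasing
    intro u₁ u₂ v₁ v₂ hu1 hu12 hu2 hv1 hv12 hv2
    simp only
    set a₁ := u₁ ^ α₂ with ha₁def
    set a₂ := u₂ ^ α₂ with ha₂def
    set b₁ := v₁ ^ α₃ with hb₁def
    set b₂ := v₂ ^ α₃ with hb₂def
    set F₁ := u₁ ^ (1 - α₂) with hF₁def
    set F₂ := u₂ ^ (1 - α₂) with hF₂def
    set G₁ := v₁ ^ (1 - α₃) with hG₁def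
    set G₂ := v₂ ^ (1 - α₃) with hG₂def
    have hu1' : u₁ ∈ Icc (0:ℝ) 1 := ⟨hu1, le_trans hu12 hu2⟩
    have hu2' : u₂ ∈ Icc (0:ℝ) 1 := ⟨le_trans hu1 hu12, hu2⟩
    have hv1' : v₁ ∈ Icc (0:ℝ) 1 := ⟨hv1, le_trans hv12 hv2⟩
    have hv2' : v₂ ∈ Icc (0:ℝ) 1 := ⟨le_trans hv1 hv12, hv2⟩
    have hF₁ : F₁ ∈ Icc (0:ℝ) 1 := hpow u₁ _ hu1' h2pos.le
    have hF₂ : F₂ ∈ Icc (0:ℝ) 1 := hpow u₂ _ hu2' h2pos.le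
    have hG₁ : G₁ ∈ Icc (0:ℝ) 1 := hpow v₁ _ hv1' h3pos.le
    have hG₂ : G₂ ∈ Icc (0:ℝ) 1 := hpow v₂ _ hv2' h3pos.le
    have ha₁ : 0 ≤ a₁ := (hpow u₁ _ hu1' hα₂0).1
    have hb₁ : 0 ≤ b₁ := (hpow v₁ _ hv1' hα₃0).1
    have ha : a₁ ≤ a₂ := hmonopow _ _ _ hu1 hu12 hα₂0
    have hb : b₁ ≤ b₂ := hmonopow _ _ _ hv1 hv12 hα₃0
    have hF : F₁ ≤ F₂ := hmonopow _ _ _ hu1 hu12 h2pos.le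
    have hG : G₁ ≤ G₂ := hmonopow _ _ _ hv1 hv12 h3pos.le
    have hA22 : (0:ℝ) ≤ C₀ F₂ G₂ := (hrange _ _ hF₂ hG₂).1
    have T1 : 0 ≤ a₁ * b₁ * (C₀ F₂ G₂ - C₀ F₂ G₁ - C₀ F₁ G₂ + C₀ F₁ G₁) :=
      mul_nonneg (mul_nonneg ha₁ hb₁)
        (hinc F₁ F₂ G₁ G₂ hF₁.1 hF hF₂.2 hG₁.1 hG hG₂.2)
    have T2 : 0 ≤ a₁ * (b₂ - b₁) * (C₀ F₂ G₂ - C₀ F₁ G₂) :=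
      mul_nonneg (mul_nonneg ha₁ (by linarith))
        (by have := hmono1 F₁ F₂ G₂ hF₁.1 hF hF₂.2 hG₂; linarith)
    have T3 : 0 ≤ (a₂ - a₁) * b₁ * (C₀ F₂ G₂ - C₀ F₂ G₁) :=
      mul_nonneg (mul_nonneg (by linarith) hb₁)
        (by have := hmono2 F₂ G₁ G₂ hF₂ hG₁.1 hG hG₂.2; linarith)
    have T4 : 0 ≤ (a₂ - a₁) * (b₂ - b₁) * C₀ F₂ G₂ :=
      mul_nonneg (mul_nonneg (by linarith) (by linarith)) hA22
    nlinarith [T1, T2, T3, T4]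
end
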